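/- arXiv:2405.10412 — 6 statements merged into one kernel-verified Lean document; each statement's English description precedes it below -/
import Mathlib

section
/- Let G = (V,E) be a graph, let S ⊆ V, and let C be a connected component of G \ S; set B = C ∪ S and A = V \ B. Let Σ ∈ M(G) be positive definite with K = Σ⁻¹. If i, j ∈ B are not adjacent in G and at least one of i, j lies in C, then ((Σ_{B,B})⁻¹)_{ij} = 0. -/
open scoped Classical
open Matrix

/-- The set of connected components of `G` with the vertices of `S` removed,
viewed as subsets of the ambient vertex set. -/
def compsOf {V : Type*} (G : SimpleGraph V) (S : Set V) : Set (Set V) :=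
  {C | ∃ c : (G.induce Sᶜ).ConnectedComponent,
    C = Subtype.val '' {u : ↥Sᶜ | (G.induce Sᶜ).connectedComponentMk u = c}}

/-- `Sig ∈ M(G)`: `Sig` is positive definite and `(Sig⁻¹)_{ij} = 0` whenever
`i ≠ j` and `ij` is not an edge of `G`. -/
def MemM {V : Type*} [Fintype V] [DecidableEq V] (G : SimpleGraph V)
    (Sig : Matrix V V ℝ) : Prop :=
  Sig.PosDef ∧ ∀ i j : V, i ≠ j → ¬ G.Adj i j → Sig⁻¹ i j = 0

lemma posDef_submatrix_inj {m n : Type*} [Fintype m] [Fintype n] [DecidableEq n]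
    {M : Matrix n n ℝ} (hM : M.PosDef) (e : m → n) (he : Function.Injective e) :
    (M.submatrix e e).PosDef := by
  exact hM.submatrix he

/-- If `C` is a connected component of `G \ S`, `B = C ∪ S`, `Sig ∈ M(G)`,
and `i, j ∈ B` are distinct, non-adjacent, with at least one of them in `C`,
then `((Sig_{B,B})⁻¹)_{ij} = 0`. -/
theorem stmt4 {V : Type*} [Fintype V] [DecidableEq V] (G : SimpleGraph V)
    (Sig : Matrix V V ℝ) (hM : MemM G Sig) (S C B : Set V)
    (hC : C ∈ compsOf G S) (hB : B = C ∪ S)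
    (i j : V) (hi : i ∈ B) (hj : j ∈ B) (hne : i ≠ j) (hadj : ¬ G.Adj i j)
    (hone : i ∈ C ∨ j ∈ C) :
    (Sig.submatrix (Subtype.val : ↥B → V) Subtype.val)⁻¹ ⟨i, hi⟩ ⟨j, hj⟩ = 0 := by
  classical
  obtain ⟨hPD, hK⟩ := hM
  have hCB : C ⊆ B := hB ▸ Set.subset_union_left
  -- vertices of C are not adjacent to vertices outside B
  have hnoadj : ∀ x ∈ C, ∀ a, a ∉ B → ¬ G.Adj x a := by
    obtain ⟨c, hc⟩ := hC
    intro x hx a ha hGa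
    rw [hc] at hx
    obtain ⟨u, hu, rfl⟩ := hx
    have haS : a ∈ Sᶜ := fun h => ha (hB ▸ Or.inr h)
    have hadj' : (G.induce Sᶜ).Adj u ⟨a, haS⟩ := by
      simpa using hGa
    have hmem : (⟨a, haS⟩ : ↥Sᶜ) ∈ {u : ↥Sᶜ | (G.induce Sᶜ).connectedComponentMk u = c} := by
      rw [Set.mem_setOf_eq, ← hu]
      exact SimpleGraph.ConnectedComponent.sound hadj'.symm.reachable
    exact ha (hCB (hc ▸ ⟨_, hmem, rfl⟩))
  set Sb : Matrix ↥B ↥B ℝ := Sig.submatrix Subtype.val Subtype.val with hSbdef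
  have hSbPD : Sb.PosDef := posDef_submatrix_inj hPD _ Subtype.val_injective
  have hdet : IsUnit Sb.det := isUnit_iff_ne_zero.mpr hSbPD.det_pos.ne'
  -- main computation when the first index is in C
  have key : ∀ (i' j' : V) (hi' : i' ∈ B) (hj' : j' ∈ B), i' ∈ C → i' ≠ j' →
      ¬ G.Adj i' j' → Sb⁻¹ ⟨i', hi'⟩ ⟨j', hj'⟩ = 0 := by
    intro i' j' hi' hj' hiC hne' hadj'
    have hKrow : ∀ k : V, k ∉ B → Sig⁻¹ i' k = 0 := fun k hk =>
      hK i' k (fun h => hk (h ▸ hi')) (hnoadj i' hiC k hk)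
    set Msub : Matrix ↥B ↥B ℝ := (Sig⁻¹).submatrix Subtype.val Subtype.val with hMsub
    have hrow : ∀ b : ↥B, (Msub * Sb) ⟨i', hi'⟩ b = (1 : Matrix ↥B ↥B ℝ) ⟨i', hi'⟩ b := by
      intro b
      have hfull : (Sig⁻¹ * Sig) i' ↑b = (1 : Matrix V V ℝ) i' ↑b := by
        rw [Matrix.nonsing_inv_mul Sig (isUnit_iff_ne_zero.mpr hPD.det_pos.ne')]
      rw [Matrix.mul_apply] at hfull
      rw [Matrix.mul_apply]
      have hsum : ∑ k : ↥B, Sig⁻¹ i' ↑k * Sig ↑k ↑b = ∑ k : V, Sig⁻¹ i' k * Sig k ↑b := by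
        rw [← Finset.sum_subtype (Finset.univ.filter (· ∈ B)) (by simp)
          (fun k => Sig⁻¹ i' k * Sig k ↑b)]
        exact Finset.sum_filter_of_ne fun k _ h =>
          by_contra fun hk => h (by rw [hKrow k hk, zero_mul])
      simp only [hMsub, hSbdef, Matrix.submatrix_apply]
      rw [hsum, hfull]
      simp [Matrix.one_apply, Subtype.ext_iff]
    have h2 : Msub ⟨i', hi'⟩ ⟨j', hj'⟩ = Sb⁻¹ ⟨i', hi'⟩ ⟨j', hj'⟩ := by
      calc Msub ⟨i', hi'⟩ ⟨j', hj'⟩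
          = (Msub * (Sb * Sb⁻¹)) ⟨i', hi'⟩ ⟨j', hj'⟩ := by
            rw [Matrix.mul_nonsing_inv _ hdet, Matrix.mul_one]
        _ = ((Msub * Sb) * Sb⁻¹) ⟨i', hi'⟩ ⟨j', hj'⟩ := by rw [Matrix.mul_assoc]
        _ = ((1 : Matrix ↥B ↥B ℝ) * Sb⁻¹) ⟨i', hi'⟩ ⟨j', hj'⟩ := by
            rw [Matrix.mul_apply, Matrix.mul_apply]
            exact Finset.sum_congr rfl fun k _ => by rw [hrow k]
        _ = Sb⁻¹ ⟨i', hi'⟩ ⟨j', hj'⟩ := by rw [Matrix.one_mul]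
    rw [← h2, hMsub]
    simpa using hK i' j' hne' hadj'
  rcases hone with hiC | hjC
  · exact key i j hi hj hiC hne hadj
  · have hherm : (Sb⁻¹).IsHermitian := (hPD.1.submatrix _).inv
    have := hherm.apply ⟨j, hj⟩ ⟨i, hi⟩
    rw [star_trivial] at this
    rw [this]
    exact key j i hj hi hjC hne.symm fun h => hadj h.symm
end

section
/- Let G = (V,E) be a graph, S ⊆ V, C a connected component of G \ S, and B = C ∪ S. Suppose Σ ∈ M(G) is positive definite. Then Σ_{B,B} ∈ M(G_B) if and only if for every pair i, j ∈ S not connected by an edge of G, ((Σ_{B,B})⁻¹)_{ij} = 0. In particular, if S is a clique in G, then Σ_{B,B} ∈ M(G_B). -/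
open scoped Classical

/-- Sums against an injectively extended function. -/
lemma sum_extend_mul {n m : Type*} [Fintype n] [Fintype m]
    (e : m → n) (he : Function.Injective e) (x : m → ℝ) (g : n → ℝ) :
    ∑ v, Function.extend e x 0 v * g v = ∑ u, x u * g (e u) := by
  classical
  have h1 : ∑ v ∈ Finset.univ.image e, Function.extend e x 0 v * g v
      = ∑ v, Function.extend e x 0 v * g v := by
    refine Finset.sum_subset (Finset.subset_univ _) ?_
    intro v _ hv
    rw [Function.extend_apply' _ _ _ (by
      rintro ⟨a, rfl⟩; exact hv (Finset.mem_image.mpr ⟨a, Finset.mem_univ a, rfl⟩))]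
    simp
  rw [← h1, Finset.sum_image (fun a _ b _ h => he h)]
  refine Finset.sum_congr rfl fun u _ => ?_
  rw [he.extend_apply]

/-- A principal submatrix (along an injective map) of a positive definite
matrix is positive definite. -/
lemma posDef_submatrix_of_injective {n m : Type*} [Fintype n] [Fintype m]
    {M : Matrix n n ℝ} (hM : M.PosDef) (e : m → n) (he : Function.Injective e) :
    (M.submatrix e e).PosDef := by
  classical
  refine Matrix.PosDef.of_dotProduct_mulVec_pos ?_ ?_
  · ext i j
    simp only [Matrix.conjTranspose_apply, Matrix.submatrix_apply]
    exact hM.1.apply (e i) (e j)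
  · intro x hx
    have hy0 : Function.extend e x 0 ≠ 0 := by
      obtain ⟨u, hu⟩ := Function.ne_iff.mp hx
      intro h
      apply hu
      have := congrFun h (e u)
      rwa [he.extend_apply] at this
    have key : dotProduct (star x) ((M.submatrix e e).mulVec x)
        = dotProduct (star (Function.extend e x 0))
          (M.mulVec (Function.extend e x 0)) := by
      simp only [dotProduct, Matrix.mulVec, Matrix.submatrix_apply, star,
        Pi.star_apply, star_trivial, id_eq]
      symm
      rw [sum_extend_mul e he x (fun v => ∑ w, M v w * Function.extend e x 0 w)]
      refine Finset.sum_congr rfl fun u _ => ?_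
      congr 1
      have h1 : (∑ w, M (e u) w * Function.extend e x 0 w)
          = ∑ w, Function.extend e x 0 w * M (e u) w :=
        Finset.sum_congr rfl fun w _ => mul_comm _ _
      rw [h1, sum_extend_mul e he x (fun w => M (e u) w)]
      exact Finset.sum_congr rfl fun w _ => mul_comm _ _
    rw [key]
    exact hM.dotProduct_mulVec_pos hy0

/-- Let `C` be a connected component of `G \ S` and `B = C ∪ S`, and let
`Sig ∈ M(G)`. Then `Sig_{B,B} ∈ M(G_B)` iff for every pair `i, j ∈ S` not joined
by an edge, `((Sig_{B,B})⁻¹)_{ij} = 0`. In particular, if `S` is a clique then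
`Sig_{B,B} ∈ M(G_B)`. -/
theorem stmt5 {V : Type*} [Fintype V] [DecidableEq V] (G : SimpleGraph V)
    (Sig : Matrix V V ℝ) (hM : MemM G Sig) (S C B : Set V)
    (hC : C ∈ compsOf G S) (hB : B = C ∪ S) :
    (MemM (G.induce B) (Sig.submatrix (Subtype.val : ↥B → V) Subtype.val) ↔
      ∀ i j : ↥B, (i : V) ∈ S → (j : V) ∈ S → i ≠ j → ¬ G.Adj (i : V) (j : V) →
        (Sig.submatrix (Subtype.val : ↥B → V) Subtype.val)⁻¹ i j = 0) ∧
    (G.IsClique S →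
      MemM (G.induce B) (Sig.submatrix (Subtype.val : ↥B → V) Subtype.val)) := by
  obtain ⟨hPD, hK⟩ := hM
  set A : Matrix ↥B ↥B ℝ := Sig.submatrix Subtype.val Subtype.val with hAdef
  have hApd : A.PosDef := posDef_submatrix_of_injective hPD _ Subtype.val_injective
  obtain ⟨c, hCc⟩ := hC
  -- C is disjoint from S
  have hCS : ∀ v ∈ C, v ∉ S := by
    intro v hv
    rw [hCc] at hv
    obtain ⟨u, _, rfl⟩ := hv
    exact u.2
  -- C is closed under adjacency within Sᶜ
  have hclose : ∀ v ∈ C, ∀ w, G.Adj v w → w ∉ S → w ∈ C := by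
    intro v hv w hadj hw
    rw [hCc] at hv ⊢
    obtain ⟨u, hu, rfl⟩ := hv
    refine ⟨⟨w, hw⟩, ?_, rfl⟩
    have hadj' : (G.induce Sᶜ).Adj ⟨w, hw⟩ u := by
      simp only [SimpleGraph.comap_adj, Function.Embedding.coe_subtype]
      exact hadj.symm
    simp only [Set.mem_setOf_eq] at hu ⊢
    rw [← hu]
    exact SimpleGraph.ConnectedComponent.sound hadj'.reachable
  -- entries of Sig⁻¹ between C and the complement of B vanish
  have hzero : ∀ i ∈ C, ∀ k, k ∉ B → Sig⁻¹ i k = 0 := by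
    intro i hi k hk
    have hkS : k ∉ S := fun h => hk (hB ▸ Set.mem_union_right _ h)
    have hkC : k ∉ C := fun h => hk (hB ▸ Set.mem_union_left _ h)
    have hne : i ≠ k := by rintro rfl; exact hkC hi
    exact hK i k hne fun hadj => hkC (hclose i hi k hadj hkS)
  have hdet : IsUnit A.det := isUnit_iff_ne_zero.mpr hApd.det_pos.ne'
  have hAinv : A * A⁻¹ = 1 := Matrix.mul_nonsing_inv _ hdet
  have hSdet : IsUnit Sig.det := isUnit_iff_ne_zero.mpr hPD.det_pos.ne'
  have hSinv : Sig⁻¹ * Sig = 1 := Matrix.nonsing_inv_mul _ hSdet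
  set KB : Matrix ↥B ↥B ℝ := (Sig⁻¹).submatrix Subtype.val Subtype.val with hKBdef
  -- rows of KB * A indexed by C agree with the identity
  have hrow : ∀ i : ↥B, (i : V) ∈ C → ∀ j : ↥B,
      (KB * A) i j = (1 : Matrix ↥B ↥B ℝ) i j := by
    intro i hi j
    have h1 : (Sig⁻¹ * Sig) (i : V) (j : V) = (1 : Matrix V V ℝ) (i : V) (j : V) := by
      rw [hSinv]
    rw [Matrix.mul_apply] at h1
    have h2 : ∑ k : V, Sig⁻¹ (i : V) k * Sig k (j : V)
        = ∑ k : ↥B, Sig⁻¹ (i : V) (k : V) * Sig (k : V) (j : V) := by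
      rw [← Finset.sum_subtype B.toFinset (fun x => Set.mem_toFinset)
        (fun k => Sig⁻¹ (i : V) k * Sig k (j : V))]
      refine (Finset.sum_subset (Finset.subset_univ _) ?_).symm
      intro k _ hk
      rw [hzero (i : V) hi k (by simpa using hk), zero_mul]
    rw [Matrix.mul_apply]
    simp only [hKBdef, hAdef, Matrix.submatrix_apply]
    rw [← h2, h1]
    by_cases h : i = j
    · subst h; simp
    · rw [Matrix.one_apply_ne h, Matrix.one_apply_ne (fun hh : (i:V) = (j:V) =>
        h (Subtype.ext hh))]
  -- hence for i ∈ C, rows of A⁻¹ agree with Sig⁻¹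
  have hmain : ∀ i : ↥B, (i : V) ∈ C → ∀ j : ↥B, A⁻¹ i j = Sig⁻¹ (i : V) (j : V) := by
    intro i hi j
    have h1 : KB i j = (KB * A * A⁻¹) i j := by
      rw [Matrix.mul_assoc, hAinv, Matrix.mul_one]
    have h2 : (KB * A * A⁻¹) i j = A⁻¹ i j := by
      rw [Matrix.mul_apply]
      have : ∀ k : ↥B, (KB * A) i k * A⁻¹ k j
          = (1 : Matrix ↥B ↥B ℝ) i k * A⁻¹ k j := by
        intro k; rw [hrow i hi k]
      rw [Finset.sum_congr rfl fun k _ => this k]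
      rw [← Matrix.mul_apply, Matrix.one_mul]
    have := h1.trans h2
    rw [← this]
    simp [hKBdef]
  -- symmetry of A⁻¹
  have hsymm : ∀ i j : ↥B, A⁻¹ i j = A⁻¹ j i := by
    intro i j
    have := hApd.1.inv.apply j i
    simpa using this
  -- the S-condition implies the full zero condition
  have hvan : (∀ i j : ↥B, (i : V) ∈ S → (j : V) ∈ S → i ≠ j →
      ¬ G.Adj (i : V) (j : V) → A⁻¹ i j = 0) →
      ∀ i j : ↥B, i ≠ j → ¬ G.Adj (i : V) (j : V) → A⁻¹ i j = 0 := by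
    intro hS i j hne hadj
    have hvne : (i : V) ≠ (j : V) := fun h => hne (Subtype.ext h)
    by_cases hiS : (i : V) ∈ S
    · by_cases hjS : (j : V) ∈ S
      · exact hS i j hiS hjS hne hadj
      · have hj' : (j : V) ∈ C ∪ S := by rw [← hB]; exact j.2
        have hjC : (j : V) ∈ C := hj'.resolve_right hjS
        rw [hsymm i j, hmain j hjC i]
        exact hK _ _ hvne.symm fun h => hadj h.symm
    · have hi' : (i : V) ∈ C ∪ S := by rw [← hB]; exact i.2
      have hiC : (i : V) ∈ C := hi'.resolve_right hiS
      rw [hmain i hiC j]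
      exact hK _ _ hvne hadj
  have hiff : MemM (G.induce B) A ↔
      ∀ i j : ↥B, (i : V) ∈ S → (j : V) ∈ S → i ≠ j →
        ¬ G.Adj (i : V) (j : V) → A⁻¹ i j = 0 := by
    constructor
    · rintro ⟨-, h⟩ i j _ _ hne hadj
      refine h i j hne fun hadj' => hadj ?_
      simpa using hadj'
    · intro hS
      refine ⟨hApd, fun i j hne hadj => ?_⟩
      refine hvan hS i j hne fun h => hadj ?_
      simpa using h
  refine ⟨hiff, fun hclique => ?_⟩
  refine hiff.mpr fun i j hiS hjS hne hadj => ?_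
  exact absurd (hclique hiS hjS fun h => hne (Subtype.ext h)) hadj
end

section
/- Let G = (V,E) be a graph, S ⊆ V, C a connected component of G \ S, and B = C ∪ S. Define the closure Ḡ_B as G_B with an edge added between any i, j ∈ S that are not adjacent in G but are connected by a path all of whose interior vertices lie outside B. If i, j ∈ B are separated in Ḡ_B by a set S' ⊆ B \ {i,j}, then i and j are separated by S' in G. -/
open scoped Classical

/-- The closure `Ḡ_B` of the induced subgraph `G_B`: the induced subgraph on `B`
together with an edge between any two non-adjacent `i, j ∈ S` that are joined in
`G` by a path whose interior vertices all lie outside `B`. -/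
def closureGraph {V : Type*} (G : SimpleGraph V) (B S : Set V) : SimpleGraph ↥B where
  Adj u v := (G.induce B).Adj u v ∨
    (u ≠ v ∧ (u : V) ∈ S ∧ (v : V) ∈ S ∧ ¬ G.Adj (u : V) (v : V) ∧
      ∃ p : G.Walk (u : V) (v : V),
        ∀ x ∈ p.support, x = (u : V) ∨ x = (v : V) ∨ x ∉ B)
  symm := by
    constructor
    rintro u v (h | ⟨hne, hu, hv, hna, p, hp⟩)
    · exact Or.inl h.symm
    · refine Or.inr ⟨hne.symm, hv, hu, fun h => hna h.symm, p.reverse, ?_⟩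
      intro x hx
      rw [SimpleGraph.Walk.support_reverse, List.mem_reverse] at hx
      rcases hp x hx with h | h | h
      · exact Or.inr (Or.inl h)
      · exact Or.inl h
      · exact Or.inr (Or.inr h)
  loopless := by
    constructor
    rintro u (h | ⟨hne, _⟩)
    · exact h.ne rfl
    · exact hne rfl

/-- A vertex of `B` adjacent to a vertex outside `B` must lie in `S`. -/
lemma boundary_mem_S {V : Type*} (G : SimpleGraph V) (S C B : Set V)
    (hC : C ∈ compsOf G S) (hB : B = C ∪ S)
    {u w : V} (hu : u ∈ B) (haw : G.Adj u w) (hw : w ∉ B) : u ∈ S := by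
  rw [hB] at hu hw
  rcases hu with hu | hu
  · exfalso
    obtain ⟨c, hc⟩ := hC
    rw [hc] at hu
    obtain ⟨u', hu', rfl⟩ := hu
    have hwS : w ∈ Sᶜ := fun hwS => hw (Or.inr hwS)
    have hadj : (G.induce Sᶜ).Adj u' ⟨w, hwS⟩ := haw
    have : (G.induce Sᶜ).connectedComponentMk ⟨w, hwS⟩ = c := by
      rw [← hu']
      exact SimpleGraph.ConnectedComponent.sound hadj.symm.reachable
    exact hw (Or.inl (by rw [hc]; exact ⟨⟨w, hwS⟩, this, rfl⟩))
  · exact hu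

/-- A walk starting outside `B` and ending in `B` decomposes at the first
vertex of `B` it meets. -/
lemma exit_lemma {V : Type*} (G : SimpleGraph V) (B : Set V) :
    ∀ {w v : V} (q : G.Walk w v), w ∉ B → v ∈ B →
    ∃ x, x ∈ B ∧ ∃ (q1 : G.Walk w x) (q2 : G.Walk x v),
      (∀ y ∈ q2.support, y ∈ q.support) ∧
      q2.length < q.length ∧
      (∀ y ∈ q1.support, y ≠ x → y ∉ B) ∧
      (∃ z, z ∉ B ∧ G.Adj z x) := by
  intro w v q
  induction q with
  | nil => intro hw hv; exact absurd hv hw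
  | @cons a b c h q' ih =>
    intro hw hv
    by_cases hb : b ∈ B
    · refine ⟨b, hb, SimpleGraph.Walk.cons h SimpleGraph.Walk.nil, q', ?_, ?_, ?_, ?_⟩
      · intro y hy
        rw [SimpleGraph.Walk.support_cons]
        exact List.mem_cons_of_mem _ hy
      · simp [SimpleGraph.Walk.length_cons]
      · intro y hy hyx
        simp only [SimpleGraph.Walk.support_cons, SimpleGraph.Walk.support_nil,
          List.mem_cons, List.mem_singleton] at hy
        rcases hy with rfl | rfl | hy
        · exact hw
        · exact absurd rfl hyx
        · exact absurd hy List.not_mem_nil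
      · exact ⟨a, hw, h⟩
    · obtain ⟨x, hx, q1, q2, hsub, hlen, hint, hz⟩ := ih hb hv
      refine ⟨x, hx, SimpleGraph.Walk.cons h q1, q2, ?_, ?_, ?_, hz⟩
      · intro y hy
        rw [SimpleGraph.Walk.support_cons]
        exact List.mem_cons_of_mem _ (hsub y hy)
      · rw [SimpleGraph.Walk.length_cons]; omega
      · intro y hy hyx
        rw [SimpleGraph.Walk.support_cons, List.mem_cons] at hy
        rcases hy with rfl | hy
        · exact hw
        · exact hint y hy hyx

/-- Main conversion lemma: a walk in `G` between vertices of `B` avoiding `S'`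
yields a walk in the closure graph avoiding `S'`. -/
lemma main_lemma {V : Type*} (G : SimpleGraph V) (S C B : Set V)
    (hC : C ∈ compsOf G S) (hB : B = C ∪ S) (S' : Set V) :
    ∀ n (u v : V) (hu : u ∈ B) (hv : v ∈ B) (q : G.Walk u v), q.length ≤ n →
    (∀ y ∈ q.support, y ∉ S') →
    ∃ p : (closureGraph G B S).Walk ⟨u, hu⟩ ⟨v, hv⟩, ∀ y ∈ p.support, (y : V) ∉ S' := by
  intro n
  induction n with
  | zero =>
    intro u v hu hv q hlen havoid
    have h0 : q.length = 0 := Nat.le_zero.mp hlen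
    have := SimpleGraph.Walk.eq_of_length_eq_zero h0
    subst this
    refine ⟨SimpleGraph.Walk.nil, ?_⟩
    intro y hy
    simp only [SimpleGraph.Walk.support_nil, List.mem_singleton] at hy
    subst hy
    exact havoid u q.start_mem_support
  | succ n ih =>
    intro u v hu hv q hlen havoid
    cases q with
    | nil =>
      refine ⟨SimpleGraph.Walk.nil, ?_⟩
      intro y hy
      simp only [SimpleGraph.Walk.support_nil, List.mem_singleton] at hy
      subst hy
      exact havoid u (by simp)
    | @cons a b c h q' =>
      have havoid' : ∀ y ∈ q'.support, y ∉ S' := fun y hy =>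
        havoid y (by rw [SimpleGraph.Walk.support_cons]; exact List.mem_cons_of_mem _ hy)
      have hq'len : q'.length ≤ n := by
        rw [SimpleGraph.Walk.length_cons] at hlen; omega
      by_cases hb : b ∈ B
      · obtain ⟨p', hp'⟩ := ih b v hb hv q' hq'len havoid'
        have hadj : (closureGraph G B S).Adj ⟨u, hu⟩ ⟨b, hb⟩ := Or.inl h
        refine ⟨SimpleGraph.Walk.cons hadj p', ?_⟩
        intro y hy
        rw [SimpleGraph.Walk.support_cons, List.mem_cons] at hy
        rcases hy with rfl | hy
        · exact havoid u (SimpleGraph.Walk.start_mem_support _)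
        · exact hp' y hy
      · obtain ⟨x, hx, q1, q2, hsub, hlen2, hint, z, hzB, hzadj⟩ :=
          exit_lemma G B q' hb hv
        have hq2len : q2.length ≤ n := by omega
        have hq2avoid : ∀ y ∈ q2.support, y ∉ S' := fun y hy => havoid' y (hsub y hy)
        obtain ⟨p2, hp2⟩ := ih x v hx hv q2 hq2len hq2avoid
        by_cases hux : u = x
        · subst hux
          exact ⟨p2, hp2⟩
        · have huS : u ∈ S := boundary_mem_S G S C B hC hB hu h hb
          have hxS : x ∈ S := boundary_mem_S G S C B hC hB hx hzadj.symm hzB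
          have hadj : (closureGraph G B S).Adj ⟨u, hu⟩ ⟨x, hx⟩ := by
            by_cases hgadj : G.Adj u x
            · exact Or.inl hgadj
            · refine Or.inr ⟨fun he => hux (congrArg Subtype.val he), huS, hxS, hgadj,
                SimpleGraph.Walk.cons h q1, ?_⟩
              intro y hy
              rw [SimpleGraph.Walk.support_cons, List.mem_cons] at hy
              rcases hy with rfl | hy
              · exact Or.inl rfl
              · by_cases hyx : y = x
                · exact Or.inr (Or.inl hyx)
                · exact Or.inr (Or.inr (hint y hy hyx))
          refine ⟨SimpleGraph.Walk.cons hadj p2, ?_⟩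
          intro y hy
          rw [SimpleGraph.Walk.support_cons, List.mem_cons] at hy
          rcases hy with rfl | hy
          · exact havoid u (SimpleGraph.Walk.start_mem_support _)
          · exact hp2 y hy

/-- If `i, j ∈ B` are separated in the closure `Ḡ_B` by a set `S' ⊆ B \ {i,j}`,
then `i` and `j` are separated by `S'` in `G`. -/
theorem stmt6 {V : Type*} (G : SimpleGraph V) (S C B : Set V)
    (hC : C ∈ compsOf G S) (hB : B = C ∪ S)
    (i j : ↥B) (S' : Set V) (hS'B : S' ⊆ B)
    (hiS' : (i : V) ∉ S') (hjS' : (j : V) ∉ S')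
    (hsep : ∀ p : (closureGraph G B S).Walk i j, ∃ s ∈ p.support, (s : V) ∈ S') :
    ∀ q : G.Walk (i : V) (j : V), ∃ s ∈ q.support, s ∈ S' := by
  intro q
  by_contra hcon
  push_neg at hcon
  obtain ⟨p, hp⟩ := main_lemma G S C B hC hB S' q.length i j i.2 j.2 q le_rfl hcon
  obtain ⟨s, hs, hsS'⟩ := hsep p
  exact hp s hs hsS'
end

section
/- Let G be a decomposable (chordal) graph in which every minimal separator is a clique. Let S be a minimal separator of G, C a connected component of G \ S, and B = C ∪ S. If A, A' ⊆ B are minimally separated in G by a set S' (i.e., S' is a separator of A and A' in G of minimum cardinality), then S' ⊆ B. -/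
open scoped Classical

/-- `S` separates `A` and `A'` in `G`: every walk from a vertex of `A` to a
vertex of `A'` meets `S`. -/
def Separates {V : Type*} (G : SimpleGraph V) (S A A' : Set V) : Prop :=
  ∀ a ∈ A, ∀ a' ∈ A', ∀ p : G.Walk a a', ∃ s ∈ p.support, s ∈ S

namespace SimpleGraph

variable {V : Type*} {G : SimpleGraph V} {S B : Set V}

lemma mem_of_adj_of_mem_compsOf {C : Set V} (hC : C ∈ compsOf G S) {u v : V}
    (hu : u ∈ C) (huv : G.Adj u v) (hv : v ∉ S) : v ∈ C := by
  obtain ⟨c, rfl⟩ := hC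
  obtain ⟨u, rfl, rfl⟩ := hu
  have hadj : (G.induce Sᶜ).Adj u ⟨v, hv⟩ := huv
  exact ⟨⟨v, hv⟩, (ConnectedComponent.connectedComponentMk_eq_of_adj hadj).symm, rfl⟩

/-- The shortcut may start at `x ≠ u` when `u ∉ B` and `x ∈ S`: the walk then enters `B` through
the clique `S`, so its entry vertex is adjacent or equal to `x`. -/
lemma Walk.exists_walk_mem_of_isClique (hclique : G.IsClique S)
    (hbdry : ∀ ⦃u v⦄, G.Adj u v → u ∈ B → v ∉ B → u ∈ S) {u w : V} (p : G.Walk u w)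
    (hw : w ∈ B) {x : V} (hx : x ∈ B) (hxu : x = u ∨ x ∈ S ∧ u ∉ B) :
    ∃ q : G.Walk x w, ∀ v ∈ q.support, v ∈ B ∧ (v = x ∨ v ∈ p.support) := by
  induction p generalizing x with
  | nil =>
    obtain rfl | ⟨-, hu⟩ := hxu
    · exact ⟨.nil, by simp [hx]⟩
    · exact absurd hw hu
  | @cons u v w huv p ih =>
    by_cases hv : v ∈ B
    · obtain ⟨q, hq⟩ := ih hw hv (Or.inl rfl)
      have hq' : ∀ z ∈ q.support, z ∈ B ∧ z ∈ (cons huv p).support := fun z hz ↦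
        ⟨(hq z hz).1, (hq z hz).2.elim (fun h ↦ h ▸ p.start_mem_support.tail _) (·.tail _)⟩
      have hxv : x = v ∨ G.Adj x v := by
        obtain rfl | ⟨hxS, hu⟩ := hxu
        · exact Or.inr huv
        · exact (eq_or_ne x v).imp_right (hclique hxS (hbdry huv.symm hv hu))
      obtain rfl | hadj := hxv
      · exact ⟨q, fun z hz ↦ ⟨(hq' z hz).1, Or.inr (hq' z hz).2⟩⟩
      · refine ⟨cons hadj q, fun z hz ↦ ?_⟩
        obtain rfl | hz := List.mem_cons.mp (support_cons hadj q ▸ hz)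
        · exact ⟨hx, Or.inl rfl⟩
        · exact ⟨(hq' z hz).1, Or.inr (hq' z hz).2⟩
    · have hxS : x ∈ S := hxu.elim (fun h ↦ h ▸ hbdry huv (h ▸ hx) hv) And.left
      obtain ⟨q, hq⟩ := ih hw hx (Or.inr ⟨hxS, hv⟩)
      exact ⟨q, fun z hz ↦ ⟨(hq z hz).1, (hq z hz).2.imp_right (·.tail _)⟩⟩

end SimpleGraph

lemma Separates.inter_of_isClique {V : Type*} {G : SimpleGraph V} {S B S' A A' : Set V}
    (hclique : G.IsClique S) (hbdry : ∀ ⦃u v⦄, G.Adj u v → u ∈ B → v ∉ B → u ∈ S)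
    (hA : A ⊆ B) (hA' : A' ⊆ B) (hsep : Separates G S' A A') : Separates G (S' ∩ B) A A' := by
  intro a ha a' ha' p
  obtain ⟨q, hq⟩ := p.exists_walk_mem_of_isClique hclique hbdry (hA' ha') (hA ha) (Or.inl rfl)
  obtain ⟨s, hs, hsS'⟩ := hsep a ha a' ha' q
  exact ⟨s, (hq s hs).2.elim (· ▸ p.start_mem_support) id, hsS', (hq s hs).1⟩

/-- Dirac-type lemma: if the (minimal) separator `S` between the component `C`
and the rest of the graph is a clique (as for decomposable graphs), `B = C ∪ S`,
and `S'` is a minimum-cardinality separator in `G` of `A, A' ⊆ B`, then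
`S' ⊆ B`. -/
theorem stmt8 {V : Type*} [Fintype V] (G : SimpleGraph V)
    (S : Set V) (hclique : G.IsClique S)
    (C B : Set V) (hC : C ∈ compsOf G S) (hB : B = C ∪ S)
    (A A' : Set V) (hA : A ⊆ B) (hA' : A' ⊆ B)
    (S' : Set V) (hsep : Separates G S' A A')
    (hmin : ∀ T : Set V, Separates G T A A' → S'.ncard ≤ T.ncard) :
    S' ⊆ B := by
  have hbdry : ∀ ⦃u v⦄, G.Adj u v → u ∈ B → v ∉ B → u ∈ S := by
    subst hB
    rintro u v huv (hu | hu) hv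
    · exact absurd (Or.inl (SimpleGraph.mem_of_adj_of_mem_compsOf hC hu huv (hv <| Or.inr ·))) hv
    · exact hu
  have hS'B : S' ∩ B = S' := Set.eq_of_subset_of_ncard_le Set.inter_subset_left
    (hmin _ (hsep.inter_of_isClique hclique hbdry hA hA')) S'.toFinite
  exact hS'B ▸ Set.inter_subset_right
end

section
/- Let G be a graph with vertex separator S whose removal leaves components among which C is one. Let A, A' ⊆ C. If the minimum size of a separator of A ∪ S and A' ∪ S in G is r + |S|, then there exists a set S' ⊆ C with |S'| = r such that S' is a minimum-size separator of A and A' in the induced subgraph G_C. -/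
open scoped Classical

/-- `S'` separates `A` and `A'` in the induced subgraph `G_C`: every walk in
`G_C` from a vertex of `A` to a vertex of `A'` meets `S'`. -/
def SepInduced {V : Type*} (G : SimpleGraph V) (C S' A A' : Set V) : Prop :=
  ∀ (a a' : ↥C), (a : V) ∈ A → (a' : V) ∈ A' →
    ∀ p : (G.induce C).Walk a a', ∃ s ∈ p.support, (s : V) ∈ S'

lemma walkInC {V : Type*} (G : SimpleGraph V) (S : Set V)
    (c : (G.induce Sᶜ).ConnectedComponent) :
    ∀ {a b : V} (p : G.Walk a b)
      (_ : ∀ x ∈ p.support, x ∉ S)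
      (_ : a ∈ Subtype.val '' {u : ↥Sᶜ | (G.induce Sᶜ).connectedComponentMk u = c}),
      ∀ x ∈ p.support, x ∈ Subtype.val '' {u : ↥Sᶜ | (G.induce Sᶜ).connectedComponentMk u = c}
  | a, _, SimpleGraph.Walk.nil, hp, ha => by
      intro x hx; simp at hx; subst hx; exact ha
  | a, b, SimpleGraph.Walk.cons (v := w) h q, hp, ha => by
      intro x hx
      obtain ⟨⟨a, haS⟩, hac, rfl⟩ := ha
      have hwS : w ∉ S := hp w (by simp)
      have hadj : (G.induce Sᶜ).Adj ⟨a, haS⟩ ⟨w, hwS⟩ := h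
      have hw : w ∈ Subtype.val '' {u : ↥Sᶜ | (G.induce Sᶜ).connectedComponentMk u = c} :=
        ⟨⟨w, hwS⟩, by simpa [SimpleGraph.ConnectedComponent.sound hadj.symm.reachable] using hac, rfl⟩
      rcases List.mem_cons.mp (by simpa using hx) with heq | hx'
      · exact heq ▸ ⟨⟨a, haS⟩, hac, rfl⟩
      · exact walkInC G S c q (fun y hy => hp y (by simp [hy])) hw x hx'

lemma liftWalk {V : Type*} (G : SimpleGraph V) (C : Set V) :
    ∀ {a b : V} (p : G.Walk a b) (hp : ∀ x ∈ p.support, x ∈ C),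
      ∃ q : (G.induce C).Walk ⟨a, hp a p.start_mem_support⟩ ⟨b, hp b p.end_mem_support⟩,
        q.support.map Subtype.val = p.support
  | a, _, SimpleGraph.Walk.nil, hp => ⟨SimpleGraph.Walk.nil, by simp⟩
  | a, b, SimpleGraph.Walk.cons (v := w) h q, hp => by
      obtain ⟨q', hq'⟩ := liftWalk G C q (fun y hy => hp y (by simp [hy]))
      refine ⟨SimpleGraph.Walk.cons
        (show (G.induce C).Adj ⟨a, hp a (by simp)⟩ ⟨w, hp w (by simp)⟩ from h) q', ?_⟩
      simp [hq']

lemma mapWalk {V : Type*} (G : SimpleGraph V) (C : Set V) {a b : ↥C}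
    (q : (G.induce C).Walk a b) :
    ∃ p : G.Walk a b, p.support = q.support.map Subtype.val := by
  refine ⟨q.map ⟨Subtype.val, fun h => h⟩, ?_⟩
  simp only [SimpleGraph.Walk.support_map]; rfl

/-- If `S` separates the component `C` from the rest of `G`, `A, A' ⊆ C`, and
the minimum size of a separator of `A ∪ S` and `A' ∪ S` in `G` is `r + |S|`,
then there is a set `S' ⊆ C` of size `r` which is a minimum-size separator of
`A` and `A'` in the induced subgraph `G_C`. -/
theorem stmt9 {V : Type*} [Fintype V] (G : SimpleGraph V)
    (S C : Set V) (hC : C ∈ compsOf G S)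
    (A A' : Set V) (hA : A ⊆ C) (hA' : A' ⊆ C) (r : ℕ)
    (T : Set V) (hT : Separates G T (A ∪ S) (A' ∪ S))
    (hTcard : T.ncard = r + S.ncard)
    (hTmin : ∀ T' : Set V, Separates G T' (A ∪ S) (A' ∪ S) → T.ncard ≤ T'.ncard) :
    ∃ S' : Set V, S' ⊆ C ∧ S'.ncard = r ∧ SepInduced G C S' A A' ∧
      ∀ T' : Set V, T' ⊆ C → SepInduced G C T' A A' → S'.ncard ≤ T'.ncard := by
  classical
  obtain ⟨c, hCeq⟩ := hC
  have hSsub : S ⊆ T := by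
    intro s hs
    obtain ⟨x, hx, hxT⟩ := hT s (Or.inr hs) s (Or.inr hs) SimpleGraph.Walk.nil
    simp only [SimpleGraph.Walk.support_nil, List.mem_singleton] at hx
    exact hx ▸ hxT
  have hCS : ∀ x ∈ C, x ∉ S := by
    intro x hx
    rw [hCeq] at hx
    obtain ⟨u, _, rfl⟩ := hx
    exact u.2
  set S' := T ∩ C with hS'def
  have hS'C : S' ⊆ C := Set.inter_subset_right
  -- any T' ⊆ C which separates in the induced graph, together with S, separates in G
  have sep_of : ∀ T' : Set V, T' ⊆ C → SepInduced G C T' A A' →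
      Separates G (S ∪ T') (A ∪ S) (A' ∪ S) := by
    intro T' _ hsep a ha a' ha' p
    by_cases hmeet : ∃ x ∈ p.support, x ∈ S
    · obtain ⟨x, hx, hxS⟩ := hmeet; exact ⟨x, hx, Or.inl hxS⟩
    push_neg at hmeet
    have haA : a ∈ A := ha.resolve_right (fun h => hmeet a p.start_mem_support h)
    have ha'A : a' ∈ A' := ha'.resolve_right (fun h => hmeet a' p.end_mem_support h)
    have hsupC : ∀ x ∈ p.support, x ∈ C := by
      rw [hCeq]
      exact walkInC G S c p hmeet (by rw [← hCeq]; exact hA haA)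
    obtain ⟨q, hq⟩ := liftWalk G C p hsupC
    obtain ⟨s, hs, hsT'⟩ := hsep _ _ haA ha'A q
    exact ⟨s, by rw [← hq]; exact List.mem_map_of_mem hs, Or.inr hsT'⟩
  have hsepS' : SepInduced G C S' A A' := by
    intro a a' haA ha'A q
    obtain ⟨p, hps⟩ := mapWalk G C q
    obtain ⟨s, hs, hsT⟩ := hT a (Or.inl haA) a' (Or.inl ha'A) p
    rw [hps] at hs
    obtain ⟨u, hu, rfl⟩ := List.mem_map.mp hs
    exact ⟨u, hu, ⟨hsT, u.2⟩⟩
  have hdisj : Disjoint S S' := Set.disjoint_left.mpr (fun x hx hx' => hCS x (hS'C hx') hx)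
  have hunion : (S ∪ S').ncard = S.ncard + S'.ncard :=
    Set.ncard_union_eq hdisj (Set.toFinite _) (Set.toFinite _)
  have hle : T.ncard ≤ (S ∪ S').ncard := hTmin _ (sep_of S' hS'C hsepS')
  have hge : (S ∪ S').ncard ≤ T.ncard :=
    Set.ncard_le_ncard (Set.union_subset hSsub Set.inter_subset_left) (Set.toFinite T)
  have hS'card : S'.ncard = r := by omega
  refine ⟨S', hS'C, hS'card, hsepS', ?_⟩
  intro T' hT'C hsep
  have h1 : T.ncard ≤ (S ∪ T').ncard := hTmin _ (sep_of T' hT'C hsep)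
  have h2 : (S ∪ T').ncard ≤ S.ncard + T'.ncard := Set.ncard_union_le _ _
  omega
end

section
/- Let G be a connected graph on vertex set V with |V| = n, and let v be a vertex of a tree G such that some component C of G \ {v} satisfies |C| > n/2 where component sizes are measured by a weight w. Let u be the neighbor of v inside C. Then the component of G \ {u} containing v has weight strictly less than w(V)/2, and every other component C' of G \ {u} satisfies w(C') ≤ w(C) − w(u). -/
open scoped Classical

section helpers

variable {V : Type*} {G : SimpleGraph V}

/-- From a reachability in an induced subgraph, extract a walk in `G` staying in `s`. -/
lemma walk_avoid_of_reachable {s : Set V} {a b : ↥s}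
    (h : (G.induce s).Reachable a b) :
    ∃ p : G.Walk a.1 b.1, ∀ x ∈ p.support, x ∈ s := by
  obtain ⟨q⟩ := h
  refine ⟨q.map (SimpleGraph.Embedding.induce s).toHom, ?_⟩
  intro x hx
  have hx' : x ∈ (q.map (SimpleGraph.Embedding.induce s).toHom).support := hx
  rw [SimpleGraph.Walk.support_map, List.mem_map] at hx'
  obtain ⟨y, -, rfl⟩ := hx'
  exact y.2

/-- From a walk in `G` staying in `s`, get reachability in the induced subgraph. -/
lemma reachable_of_walk_avoid {s : Set V} :
    ∀ {a b : V} (p : G.Walk a b) (hp : ∀ x ∈ p.support, x ∈ s),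
      (G.induce s).Reachable ⟨a, hp a p.start_mem_support⟩ ⟨b, hp b p.end_mem_support⟩ := by
  intro a b p
  induction p with
  | nil => intro hp; rfl
  | @cons a c b h q ih =>
    intro hp
    have hp' : ∀ x ∈ q.support, x ∈ s := fun x hx => hp x (by simp [hx])
    have hadj : (G.induce s).Adj ⟨a, hp a (SimpleGraph.Walk.start_mem_support _)⟩
        ⟨c, hp' c q.start_mem_support⟩ := by
      simpa using h
    exact hadj.reachable.trans (ih hp')

/-- In an acyclic graph, if some walk from `a` to `b` avoids `m`, then every path
from `a` to `b` avoids `m`. -/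
lemma path_avoid (hA : G.IsAcyclic) {a b m : V}
    (W : G.Walk a b) (hW : m ∉ W.support) (P : G.Walk a b) (hP : P.IsPath) :
    m ∉ P.support := by
  have hPW : P = W.bypass := by
    have := hA.path_unique ⟨P, hP⟩ ⟨W.bypass, W.bypass_isPath⟩
    exact congrArg Subtype.val this
  rw [hPW]
  exact fun h => hW (W.support_bypass_subset h)

end helpers

/-- Let `G` be a tree with nonnegative vertex weights `w`, `v` a vertex, and `C`
a component of `G \ {v}` of weight greater than `w(V)/2`. If `u` is the neighbor
of `v` inside `C`, then the component of `G \ {u}` containing `v` has weight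
strictly less than `w(V)/2`, and every other component `C'` of `G \ {u}`
satisfies `w(C') ≤ w(C) − w(u)`. -/
theorem stmt18 {V : Type*} [Fintype V] (G : SimpleGraph V) (hT : G.IsTree)
    (w : V → ℝ) (hw : ∀ x, 0 ≤ w x) (v : V)
    (C : Set V) (hC : C ∈ compsOf G ({v} : Set V))
    (hbig : (∑ x, w x) / 2 < ∑ x, C.indicator w x)
    (u : V) (huC : u ∈ C) (hadj : G.Adj v u) :
    ∀ D ∈ compsOf G ({u} : Set V),
      (v ∈ D → (∑ x, D.indicator w x) < (∑ x, w x) / 2) ∧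
      (v ∉ D → (∑ x, D.indicator w x) ≤ (∑ x, C.indicator w x) - w u) := by
  have hA : G.IsAcyclic := hT.2
  have hvu : v ≠ u := hadj.ne
  obtain ⟨c, rfl⟩ := hC
  -- u data
  obtain ⟨u', hu'c, rfl⟩ := huC
  have hu_mem : (u' : V) ∈ ({v} : Set V)ᶜ := u'.2
  -- characterization of membership in C
  have hCmem : ∀ x : V, x ∈ (Subtype.val '' {y : ↥({v} : Set V)ᶜ |
      (G.induce ({v} : Set V)ᶜ).connectedComponentMk y = c}) ↔
      x ≠ v ∧ ∃ p : G.Walk x u', v ∉ p.support := by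
    intro x
    constructor
    · rintro ⟨y, hy, rfl⟩
      have hyne : (y : V) ≠ v := by have := y.2; rwa [Set.mem_compl_iff, Set.mem_singleton_iff] at this
      refine ⟨hyne, ?_⟩
      have hr : (G.induce ({v} : Set V)ᶜ).Reachable y u' := by
        rw [← SimpleGraph.ConnectedComponent.eq]
        rw [Set.mem_setOf_eq] at hy
        rw [hy, hu'c]
      obtain ⟨p, hp⟩ := walk_avoid_of_reachable hr
      exact ⟨p, fun h => (hp v h) rfl⟩
    · rintro ⟨hxv, p, hp⟩
      have hps : ∀ z ∈ p.support, z ∈ ({v} : Set V)ᶜ := by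
        intro z hz
        simp only [Set.mem_compl_iff, Set.mem_singleton_iff]
        exact fun h => hp (h ▸ hz)
      have hr := reachable_of_walk_avoid p hps
      refine ⟨⟨x, hps x p.start_mem_support⟩, ?_, rfl⟩
      rw [Set.mem_setOf_eq, ← hu'c]
      exact SimpleGraph.ConnectedComponent.eq.2 (by convert hr using 2)
  set C : Set V := Subtype.val '' {y : ↥({v} : Set V)ᶜ |
      (G.induce ({v} : Set V)ᶜ).connectedComponentMk y = c} with hCdef
  intro D hD
  obtain ⟨d, rfl⟩ := hD
  -- pick a representative of D
  obtain ⟨b, hb⟩ := d.exists_rep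
  have hDmem : ∀ x : V, x ∈ (Subtype.val '' {y : ↥({(u' : V)} : Set V)ᶜ |
      (G.induce ({(u' : V)} : Set V)ᶜ).connectedComponentMk y = d}) ↔
      x ≠ u' ∧ ∃ p : G.Walk x b, (u' : V) ∉ p.support := by
    intro x
    constructor
    · rintro ⟨y, hy, rfl⟩
      have hyne : (y : V) ≠ u' := by have := y.2; rwa [Set.mem_compl_iff, Set.mem_singleton_iff] at this
      refine ⟨hyne, ?_⟩
      have hr : (G.induce ({(u' : V)} : Set V)ᶜ).Reachable y b := by
        rw [← SimpleGraph.ConnectedComponent.eq]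
        rw [Set.mem_setOf_eq] at hy
        rw [hy]; exact hb.symm
      obtain ⟨p, hp⟩ := walk_avoid_of_reachable hr
      exact ⟨p, fun h => (hp _ h) rfl⟩
    · rintro ⟨hxu, p, hp⟩
      have hps : ∀ z ∈ p.support, z ∈ ({(u' : V)} : Set V)ᶜ := by
        intro z hz
        simp only [Set.mem_compl_iff, Set.mem_singleton_iff]
        exact fun h => hp (h ▸ hz)
      have hr := reachable_of_walk_avoid p hps
      refine ⟨⟨x, hps x p.start_mem_support⟩, ?_, rfl⟩
      rw [Set.mem_setOf_eq, ← hb]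
      exact SimpleGraph.ConnectedComponent.eq.2 (by convert hr using 2)
  set D : Set V := Subtype.val '' {y : ↥({(u' : V)} : Set V)ᶜ |
      (G.induce ({(u' : V)} : Set V)ᶜ).connectedComponentMk y = d} with hDdef
  have huC : (u' : V) ∈ C := ⟨u', hu'c, rfl⟩
  -- basic sum facts
  have hsum_le : ∀ (A B : Set V), A ⊆ B →
      (∑ x, A.indicator w x) ≤ ∑ x, B.indicator w x := by
    intro A B hAB
    exact Finset.sum_le_sum fun x _ =>
      Set.indicator_le_indicator_of_subset hAB hw x
  constructor
  · -- v ∈ D case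
    intro hvD
    have hDC : D ⊆ Cᶜ := by
      intro x hxD hxC
      rw [hDmem] at hxD hvD
      obtain ⟨hxu, p, hp⟩ := hxD
      rw [hCmem] at hxC
      obtain ⟨hxv, q, hq⟩ := hxC
      -- q : x → u' avoiding v ; extend by edge u'–v to a path x → v containing u'
      have hqpath : (q.bypass).IsPath := q.bypass_isPath
      have hqb : v ∉ q.bypass.support := fun h => hq (q.support_bypass_subset h)
      have W : G.Walk x v := q.bypass.concat hadj.symm
      have hWpath : (q.bypass.concat hadj.symm).IsPath := by
        rw [SimpleGraph.Walk.isPath_def, SimpleGraph.Walk.support_concat]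
        rw [List.nodup_append]
        refine ⟨hqpath.support_nodup, List.nodup_singleton v, ?_⟩
        intro z hz y hz' hzy
        simp only [List.mem_singleton] at hz'
        subst hz' hzy
        exact hqb hz
      -- v and x are in the same component of G \ {u'}, so any walk from x to v avoiding u'
      obtain ⟨hvne, pv, hpv⟩ := hvD
      -- pv : v → b avoiding u'; p : x → b avoiding u'. combine: x → v avoiding u'
      have Wxv : G.Walk x v := p.append pv.reverse
      have hWxv : (u' : V) ∉ (p.append pv.reverse).support := by
        rw [SimpleGraph.Walk.mem_support_append_iff]
        rintro (h | h)
        · exact hp h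
        · exact hpv (by simpa using h)
      have := path_avoid hA _ hWxv _ hWpath
      exact this (by
        rw [SimpleGraph.Walk.support_concat]
        exact List.mem_append_left _ q.bypass.end_mem_support)
    -- sum bound
    have h1 : (∑ x, D.indicator w x) ≤ ∑ x, Cᶜ.indicator w x := hsum_le _ _ hDC
    have h2 : (∑ x, Cᶜ.indicator w x) = (∑ x, w x) - ∑ x, C.indicator w x := by
      rw [← Finset.sum_sub_distrib]
      refine Finset.sum_congr rfl fun x _ => ?_
      by_cases hx : x ∈ C <;> simp [Set.indicator_apply, hx]
    linarith
  · -- v ∉ D case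
    intro hvD
    have hDC : D ⊆ C \ {(u' : V)} := by
      intro x hxD
      have hxD' := hxD
      rw [hDmem] at hxD'
      obtain ⟨hxu, p, hp⟩ := hxD'
      have hxv : x ≠ v := fun h => hvD (h ▸ hxD)
      refine ⟨?_, hxu⟩
      rw [hCmem]
      refine ⟨hxv, ?_⟩
      -- take the unique path from x to u' in the tree; it avoids v
      obtain ⟨P0⟩ := hT.1.preconnected x u'
      set P := P0.bypass with hP
      have hPpath : P.IsPath := P0.bypass_isPath
      refine ⟨P, fun hvP => ?_⟩
      -- split at v: prefix from x to v avoids u', contradicting v ∉ D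
      have ht := P.takeUntil v hvP
      have htpath : (P.takeUntil v hvP).IsPath := hPpath.takeUntil hvP
      have hu_not : (u' : V) ∉ (P.takeUntil v hvP).support := by
        intro hu'
        -- u' appears in prefix and as final vertex of suffix; contradicts nodup
        have hspec := P.take_spec hvP
        have hnodup : P.support.Nodup := hPpath.support_nodup
        rw [← hspec, SimpleGraph.Walk.support_append, List.nodup_append] at hnodup
        have hdrop : (u' : V) ∈ (P.dropUntil v hvP).support.tail := by
          have hend : (u' : V) ∈ (P.dropUntil v hvP).support :=
            (P.dropUntil v hvP).end_mem_support
          have : (P.dropUntil v hvP).support = v :: (P.dropUntil v hvP).support.tail := by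
            rw [← SimpleGraph.Walk.support_eq_cons]
          rw [this, List.mem_cons] at hend
          rcases hend with h | h
          · exact absurd h (by have := hu_mem; rw [Set.mem_compl_iff, Set.mem_singleton_iff] at this; exact this)
          · exact h
        exact hnodup.2.2 _ hu' _ hdrop rfl
      -- now x reachable to v avoiding u', so v ∈ D: contradiction
      apply hvD
      rw [hDmem]
      refine ⟨hvu, ?_⟩
      obtain ⟨q, hq⟩ := (hDmem x).1 hxD |>.2
      exact ⟨(P.takeUntil v hvP).reverse.append q, by
        rw [SimpleGraph.Walk.mem_support_append_iff]
        rintro (h | h)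
        · exact hu_not (by simpa using h)
        · exact hq h⟩
    -- sum bound
    have h1 : (∑ x, D.indicator w x) ≤ ∑ x, (C \ {(u' : V)}).indicator w x :=
      hsum_le _ _ hDC
    have h2 : (∑ x, (C \ {(u' : V)}).indicator w x)
        = (∑ x, C.indicator w x) - w u' := by
      have : ∀ x, (C \ {(u' : V)}).indicator w x
          = C.indicator w x - ({(u' : V)} : Set V).indicator w x := by
        intro x
        by_cases hx : x ∈ C
        · by_cases hxu : x = (u' : V)
          · subst hxu; simp [Set.indicator_apply, hx]
          · simp [Set.indicator_apply, hx, hxu]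
        · have hxu : x ≠ (u' : V) := fun h => hx (h ▸ huC)
          simp [Set.indicator_apply, hx, hxu]
      rw [Finset.sum_congr rfl fun x _ => this x, Finset.sum_sub_distrib]
      congr 1
      rw [Finset.sum_eq_single (u' : V)]
      · simp
      · intro y _ hy; simp [Set.indicator_apply, hy]
      · intro h; exact absurd (Finset.mem_univ _) h
    linarith
end
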